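/- arXiv:1709.00599 — 2 statements merged into one kernel-verified Lean document; each statement's English description precedes it below -/
import Mathlib

section
/- Let L_n, L : ℝ^p → ℝ with sup_w |L_n(w) - L(w)| ≤ V_n for some V_n > 0, and let w* minimize L over ℝ^p. Define R_n(w) = L_n(w) + (c V_n / 2) ‖w‖², c > 0, and let w_n* be a minimizer of R_n. Then ‖w_n*‖² ≤ 4/c + ‖w*‖². -/
/-- Deterministic version of Lemma 2: norm bound on the minimizer of the
regularized empirical risk. -/
theorem stmt_2 {p : ℕ} (Ln L : EuclideanSpace ℝ (Fin p) → ℝ)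
    (Vn c : ℝ) (hVn : 0 < Vn) (hc : 0 < c)
    (hsup : ∀ w, |Ln w - L w| ≤ Vn)
    (wstar : EuclideanSpace ℝ (Fin p)) (hwstar : ∀ w, L wstar ≤ L w)
    (Rn : EuclideanSpace ℝ (Fin p) → ℝ)
    (hRn : ∀ w, Rn w = Ln w + (c * Vn / 2) * ‖w‖ ^ 2)
    (wnstar : EuclideanSpace ℝ (Fin p)) (hwnstar : ∀ w, Rn wnstar ≤ Rn w) :
    ‖wnstar‖ ^ 2 ≤ 4 / c + ‖wstar‖ ^ 2 := by
  have h1 := hwnstar wstar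
  rw [hRn, hRn] at h1
  have h2 : Ln wstar - Ln wnstar ≤ 2 * Vn := by
    have a1 := abs_le.mp (hsup wstar)
    have a2 := abs_le.mp (hsup wnstar)
    have := hwstar wnstar
    linarith [a1.1, a1.2, a2.1, a2.2]
  have key : (c * Vn / 2) * ‖wnstar‖ ^ 2 ≤ 2 * Vn + (c * Vn / 2) * ‖wstar‖ ^ 2 := by
    linarith
  have hcv : 0 < c * Vn / 2 := by positivity
  have : ‖wnstar‖ ^ 2 ≤ (2 * Vn + (c * Vn / 2) * ‖wstar‖ ^ 2) / (c * Vn / 2) :=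
    (le_div_iff₀' hcv).mpr (by linarith)
  calc ‖wnstar‖ ^ 2 ≤ (2 * Vn + (c * Vn / 2) * ‖wstar‖ ^ 2) / (c * Vn / 2) := this
    _ = 4 / c + ‖wstar‖ ^ 2 := by field_simp; ring
end

section
/- Deterministic version of Proposition 1: Suppose L, L_m, L_{n-m} : ℝ^p → ℝ satisfy sup_w |L_m(w) - L(w)| ≤ V_m, sup_w |L_{n-m}(w) - L(w)| ≤ V_{n-m}, and sup_w |L_n(w) - L(w)| ≤ V_n, where L_n = (m/n)L_m + ((n-m)/n)L_{n-m}, 0 < m < n, 0 < V_n ≤ V_m. Let c > 0, let w* minimize L, define R_k(w) = L_k(w) + (c V_k/2)‖w‖² for k ∈ {m, n} with minimizers w_m*, w_n*, and suppose w_m satisfies R_m(w_m) - R_m(w_m*) ≤ δ_m. Then R_n(w_m) - R_n(w_n*) ≤ δ_m + (2(n-m)/n)(V_{n-m} + V_m) + 2(V_m - V_n) + (c(V_m - V_n)/2)‖w*‖². -/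
/-!
Telescope `R_n(w_m) - R_n(w_n*)` through `R_m(w_m)`, `R_m(w_m*)` and `R_m(w_n*)`. The middle
steps cost at most `δ_m` and `0`. The outer steps compare `R_n` with `R_m` at a single point: the
losses differ by `((n-m)/n)(L_{n-m} - L_m)`, hence by at most `((n-m)/n)(V_{n-m} + V_m)`, and the
regularizers by `(c (V_m - V_n)/2)‖w‖²`, which has the favourable sign at `w_m` and is controlled
at `w_n*` by `‖w_n*‖² ≤ 4/c + ‖w*‖²`. That last bound comes from comparing `R_n(w_n*) ≤ R_n(w*)`
and `L(w*) ≤ L(w_n*)`, since `L_n` and `L` differ by at most `V_n`.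
-/

lemma abs_weighted_add_sub_le {s t a b ℓ Va Vb : ℝ} (hst : s + t = 1) (ht : 0 ≤ t)
    (ha : |a - ℓ| ≤ Va) (hb : |b - ℓ| ≤ Vb) :
    |s * a + t * b - a| ≤ t * (Vb + Va) := by
  have hsplit : s * a + t * b - a = t * (b - a) := by
    rw [← sub_eq_of_eq_add' hst.symm]; ring
  rw [hsplit, abs_mul, abs_of_nonneg ht]
  gcongr
  calc |b - a| ≤ |b - ℓ| + |ℓ - a| := abs_sub_le b ℓ a
    _ ≤ Vb + Va := by rw [abs_sub_comm ℓ a]; exact add_le_add hb ha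

lemma le_add_two_of_regularized_le {α : Type*} {L L' R r : α → ℝ} {V : ℝ} {w₀ w : α}
    (hV : 0 < V) (hL' : ∀ w, |L' w - L w| ≤ V) (hw₀ : ∀ w, L w₀ ≤ L w)
    (hR : ∀ w, R w = L' w + V * r w) (hw : R w ≤ R w₀) :
    r w ≤ 2 + r w₀ := by
  rw [hR, hR] at hw
  have h₀ := abs_le.1 (hL' w₀)
  have h₁ := abs_le.1 (hL' w)
  have hVr : V * r w ≤ V * (2 + r w₀) := by linarith [hw₀ w]
  exact le_of_mul_le_mul_left hVr hV

theorem stmt_8_general {p : ℕ} (L Lm Lnm Ln : EuclideanSpace ℝ (Fin p) → ℝ)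
    (m n : ℕ) (hmn : m < n)
    (Vm Vnm Vn c δm : ℝ) (hVn : 0 < Vn) (hVnVm : Vn ≤ Vm) (hc : 0 < c)
    (hLm : ∀ w, |Lm w - L w| ≤ Vm)
    (hLnm : ∀ w, |Lnm w - L w| ≤ Vnm)
    (hLnL : ∀ w, |Ln w - L w| ≤ Vn)
    (hLn : ∀ w, Ln w = ((m : ℝ) / n) * Lm w + (((n : ℝ) - m) / n) * Lnm w)
    (wstar : EuclideanSpace ℝ (Fin p)) (hwstar : ∀ w, L wstar ≤ L w)
    (Rm Rn : EuclideanSpace ℝ (Fin p) → ℝ)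
    (hRm : ∀ w, Rm w = Lm w + (c * Vm / 2) * ‖w‖ ^ 2)
    (hRn : ∀ w, Rn w = Ln w + (c * Vn / 2) * ‖w‖ ^ 2)
    (wmstar : EuclideanSpace ℝ (Fin p)) (hwmstar : ∀ w, Rm wmstar ≤ Rm w)
    (wnstar : EuclideanSpace ℝ (Fin p)) (hwnstar : ∀ w, Rn wnstar ≤ Rn w)
    (wm : EuclideanSpace ℝ (Fin p)) (hwm : Rm wm - Rm wmstar ≤ δm) :
    Rn wm - Rn wnstar ≤ δm + (2 * ((n : ℝ) - m) / n) * (Vnm + Vm)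
      + 2 * (Vm - Vn) + (c * (Vm - Vn) / 2) * ‖wstar‖ ^ 2 := by
  have hn : (0 : ℝ) < n := by exact_mod_cast (Nat.zero_le m).trans_lt hmn
  have hweights : (m : ℝ) / n + ((n : ℝ) - m) / n = 1 := by field_simp; ring
  have ht : 0 ≤ ((n : ℝ) - m) / n :=
    div_nonneg (sub_nonneg.2 (Nat.cast_le.2 hmn.le)) hn.le
  set A := ((n : ℝ) - m) / n * (Vnm + Vm) with hA
  have hgap : ∀ w, |Ln w - Lm w| ≤ A := fun w => by
    rw [hLn]; exact abs_weighted_add_sub_le hweights ht (hLm w) (hLnm w)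
  have hnorm : c / 2 * ‖wnstar‖ ^ 2 ≤ 2 + c / 2 * ‖wstar‖ ^ 2 :=
    le_add_two_of_regularized_le (r := fun w => c / 2 * ‖w‖ ^ 2) hVn hLnL hwstar
      (fun w => by rw [hRn]; ring) (hwnstar wstar)
  have h_at_wm : Rn wm - Rm wm ≤ A := by
    have hreg : 0 ≤ c * (Vm - Vn) / 2 * ‖wm‖ ^ 2 := by
      have : 0 ≤ Vm - Vn := by linarith
      positivity
    rw [hRn, hRm]; linarith [(abs_le.1 (hgap wm)).2]
  have h_at_wnstar : Rm wnstar - Rn wnstar ≤ A + (Vm - Vn) * (2 + c / 2 * ‖wstar‖ ^ 2) := by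
    have hreg := mul_le_mul_of_nonneg_left hnorm (sub_nonneg.2 hVnVm)
    rw [hRn, hRm]; linarith [(abs_le.1 (hgap wnstar)).1]
  calc Rn wm - Rn wnstar
      = (Rn wm - Rm wm) + (Rm wm - Rm wmstar) + (Rm wmstar - Rm wnstar)
          + (Rm wnstar - Rn wnstar) := by ring
    _ ≤ A + δm + 0 + (A + (Vm - Vn) * (2 + c / 2 * ‖wstar‖ ^ 2)) := by
        gcongr
        exact sub_nonpos.2 (hwmstar wnstar)
    _ = _ := by rw [hA]; ring

/-- Deterministic (pointwise) version of Proposition 1. -/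
theorem stmt_8 {p : ℕ} (L Lm Lnm Ln : EuclideanSpace ℝ (Fin p) → ℝ)
    (m n : ℕ) (hm : 0 < m) (hmn : m < n)
    (Vm Vnm Vn c δm : ℝ) (hVn : 0 < Vn) (hVnVm : Vn ≤ Vm) (hc : 0 < c) (hδm : 0 ≤ δm)
    (hLm : ∀ w, |Lm w - L w| ≤ Vm)
    (hLnm : ∀ w, |Lnm w - L w| ≤ Vnm)
    (hLnL : ∀ w, |Ln w - L w| ≤ Vn)
    (hLn : ∀ w, Ln w = ((m : ℝ) / n) * Lm w + (((n : ℝ) - m) / n) * Lnm w)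
    (wstar : EuclideanSpace ℝ (Fin p)) (hwstar : ∀ w, L wstar ≤ L w)
    (Rm Rn : EuclideanSpace ℝ (Fin p) → ℝ)
    (hRm : ∀ w, Rm w = Lm w + (c * Vm / 2) * ‖w‖ ^ 2)
    (hRn : ∀ w, Rn w = Ln w + (c * Vn / 2) * ‖w‖ ^ 2)
    (wmstar : EuclideanSpace ℝ (Fin p)) (hwmstar : ∀ w, Rm wmstar ≤ Rm w)
    (wnstar : EuclideanSpace ℝ (Fin p)) (hwnstar : ∀ w, Rn wnstar ≤ Rn w)
    (wm : EuclideanSpace ℝ (Fin p)) (hwm : Rm wm - Rm wmstar ≤ δm) :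
    Rn wm - Rn wnstar ≤ δm + (2 * ((n : ℝ) - m) / n) * (Vnm + Vm)
      + 2 * (Vm - Vn) + (c * (Vm - Vn) / 2) * ‖wstar‖ ^ 2 :=
  stmt_8_general L Lm Lnm Ln m n hmn Vm Vnm Vn c δm hVn hVnVm hc hLm hLnm hLnL hLn wstar hwstar Rm
    Rn hRm hRn wmstar hwmstar wnstar hwnstar wm hwm
end
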